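/- Let g be a directed multigraph on n vertices with walk generator S, and define the G-coloring by (G^1)_{ij} = V \ {v_j} if S_{ij} ≠ ∅ and i ≠ j, else ∅. Define H^1 to be the diagonal of S (loops) and (H^{k+1})_{ii} = ⋃_{β=1}^n (F^k)_{iβ} ∩ (G^1)_{βi} for k ≥ 1, with off-diagonal entries ∅. If there is a cycle of length k ≥ 2 through v_i (a closed walk whose k vertices are pairwise distinct, starting and ending at v_i), then (H^k)_{ii} ≠ ∅. -/
import Mathlib


open Classical in
/-- The arc `F`-coloring: `(F^1)_{ij} = V \ {v_i}` if `S_{ij} ≠ ∅` and `i ≠ j`. -/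
noncomputable def F1 {n : ℕ} {α : Type*} (S : Fin n → Fin n → Set α) :
    Fin n → Fin n → Set (Fin n) :=
  fun i j => if (S i j).Nonempty ∧ i ≠ j then {v | v ≠ i} else ∅

open Classical in
/-- The arc `G`-coloring: `(G^1)_{ij} = V \ {v_j}` if `S_{ij} ≠ ∅` and `i ≠ j`. -/
noncomputable def G1 {n : ℕ} {α : Type*} (S : Fin n → Fin n → Set α) :
    Fin n → Fin n → Set (Fin n) :=
  fun i j => if (S i j).Nonempty ∧ i ≠ j then {v | v ≠ j} else ∅

/-- The walk `F`-coloring; `Fcol S k = F^k` for `k ≥ 1`. -/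
noncomputable def Fcol {n : ℕ} {α : Type*} (S : Fin n → Fin n → Set α) :
    ℕ → Fin n → Fin n → Set (Fin n)
  | 0 => fun _ _ => ∅
  | 1 => F1 S
  | (k + 2) => fun i j =>
      if i = j then ∅ else ⋃ β : Fin n, Fcol S (k + 1) i β ∩ F1 S β j

/-- The diagonal of the `H`-coloring for `k ≥ 2`:
`(H^k)_{ii} = ⋃_β (F^{k-1})_{iβ} ∩ (G^1)_{βi}`. -/
noncomputable def Hdiag {n : ℕ} {α : Type*} (S : Fin n → Fin n → Set α)
    (k : ℕ) (i : Fin n) : Set (Fin n) :=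
  ⋃ β : Fin n, Fcol S (k - 1) i β ∩ G1 S β i

/-- A cycle of length `k` through `i`: a closed walk `w` of length `k` from `i`
to `i` whose `k` vertices (the start counted once) are pairwise distinct. -/
def HasCycle {n : ℕ} {α : Type*} (S : Fin n → Fin n → Set α) (k : ℕ) (i : Fin n) : Prop :=
  ∃ w : Fin (k + 1) → Fin n, Function.Injective (fun m : Fin k => w m.castSucc) ∧
    w 0 = i ∧ w (Fin.last k) = i ∧
    ∀ m : Fin k, (S (w m.castSucc) (w m.succ)).Nonempty

lemma mem_Fcol_aux {n : ℕ} {α : Type*} (S : Fin n → Fin n → Set α) (w : ℕ → Fin n)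
    (m : ℕ) (hm : 1 ≤ m)
    (harc : ∀ l < m, (S (w l) (w (l+1))).Nonempty)
    (hinj : ∀ a b, a ≤ m → b ≤ m → w a = w b → a = b)
    (v : Fin n) (hv : ∀ l < m, v ≠ w l) :
    v ∈ Fcol S m (w 0) (w m) := by
  induction m with
  | zero => omega
  | succ p ih =>
    rcases Nat.lt_or_ge p 1 with h1 | h1
    · obtain rfl : p = 0 := by omega
      have h := harc 0 (by norm_num)
      have hne : w 0 ≠ w 1 := fun he => by have := hinj 0 1 (by omega) (by omega) he; omega
      have : v ≠ w 0 := hv 0 (by norm_num)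
      simp [Fcol, F1, h, hne, this]
    · obtain ⟨q, rfl⟩ : ∃ q, p = q + 1 := ⟨p - 1, by omega⟩
      have hne : w 0 ≠ w (q + 2) := fun he => by
        have := hinj 0 (q+2) (by omega) (by omega) he; omega
      have hred : Fcol S (q + 2) (w 0) (w (q+2)) =
          ⋃ β, Fcol S (q+1) (w 0) β ∩ F1 S β (w (q+2)) := by
        simp [Fcol, hne]
      rw [hred]
      refine Set.mem_iUnion.2 ⟨w (q+1), Set.mem_inter ?_ ?_⟩
      · exact ih (by omega) (fun l hl => harc l (by omega))
          (fun a b ha hb => hinj a b (by omega) (by omega))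
          (fun l hl => hv l (by omega))
      · have harc' := harc (q+1) (by omega)
        have hne' : w (q+1) ≠ w (q+2) := fun he => by
          have := hinj (q+1) (q+2) (by omega) (by omega) he; omega
        have : v ≠ w (q+1) := hv (q+1) (by omega)
        simp [F1, harc', hne', this]

theorem stmt9 {n : ℕ} {α : Type*} (S : Fin n → Fin n → Set α)
    (k : ℕ) (hk : 2 ≤ k) (i : Fin n) (hc : HasCycle S k i) :
    (Hdiag S k i).Nonempty := by
  obtain ⟨w, hinj, h0, hlast, harc⟩ := hc
  set w' : ℕ → Fin n := fun l => w ⟨min l k, Nat.lt_succ_of_le (Nat.min_le_right l k)⟩ with hw'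
  have hw'eq : ∀ l (hl : l ≤ k), w' l = w ⟨l, by omega⟩ := by
    intro l hl; simp [hw', Nat.min_eq_left hl]
  -- injectivity on 0..k-1
  have hinj' : ∀ a b, a ≤ k - 1 → b ≤ k - 1 → w' a = w' b → a = b := by
    intro a b ha hb he
    rw [hw'eq a (by omega), hw'eq b (by omega)] at he
    have := @hinj ⟨a, by omega⟩ ⟨b, by omega⟩ (by
      simpa [Fin.castSucc, Fin.ext_iff] using he)
    simpa [Fin.ext_iff] using this
  have harc' : ∀ l < k - 1, (S (w' l) (w' (l+1))).Nonempty := by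
    intro l hl
    rw [hw'eq l (by omega), hw'eq (l+1) (by omega)]
    have := harc ⟨l, by omega⟩
    simpa [Fin.castSucc, Fin.succ, Fin.ext_iff] using this
  set β : Fin n := w' (k - 1) with hβ
  have hv : ∀ l < k - 1, β ≠ w' l := by
    intro l hl he
    have := hinj' (k-1) l (le_refl _) (by omega) he
    omega
  have hmem : β ∈ Fcol S (k-1) (w' 0) (w' (k-1)) :=
    mem_Fcol_aux S w' (k-1) (by omega) harc' hinj' β hv
  have h0' : w' 0 = i := by rw [hw'eq 0 (by omega)]; simpa using h0
  -- last arc : S β i nonempty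
  have hlastarc : (S β i).Nonempty := by
    have := harc ⟨k-1, by omega⟩
    have h1 : (⟨k-1, by omega⟩ : Fin k).castSucc = (⟨k-1, by omega⟩ : Fin (k+1)) := rfl
    have h2 : (⟨k-1, by omega⟩ : Fin k).succ = Fin.last k := by
      simp [Fin.ext_iff, Fin.last]; omega
    rw [h1, h2, hlast] at this
    rwa [hβ, hw'eq (k-1) (by omega)]
  have hβne : β ≠ i := by
    intro he
    have : w' (k-1) = w' 0 := by rw [h0']; exact he
    have := hinj' (k-1) 0 (le_refl _) (by omega) this
    omega
  refine ⟨β, Set.mem_iUnion.2 ⟨β, Set.mem_inter ?_ ?_⟩⟩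
  · rw [← h0']; exact hmem
  · simp [G1, hlastarc, hβne]
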